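/- arXiv:1209.4766 — 4 statements merged into one kernel-verified Lean document; each statement's English description precedes it below -/
import Mathlib

section
/- The set 𝓒 is linear: if φ, ψ ∈ 𝓒 and a, b ∈ ℝ, then aφ + bψ ∈ 𝓒. -/
/-!
Conditions (c1) and (c2) pass to `aφ + bψ` by linearity of `𝓕` and of the pairings; the point is
the convergence of the norms `⟨aφ + bψ, aφ + bψ⟩_n`, i.e. `⟨φ, ψ⟩_n → ⟨φ, ψ⟩` for `φ, ψ ∈ 𝓒`.
For this approximate `ψ` in `L²(ν)` by `χ ∈ 𝓕`: `⟨φ, χ⟩_n` converges by (c2), `‖ψ - χ‖_n`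
converges to the small number `‖ψ - χ‖` by (c2) for `ψ` together with `χ, ψ ∈ 𝓓`, and
Cauchy–Schwarz with the bound on `‖φ‖_n` makes `⟨φ, ψ - χ⟩_n` uniformly small.
-/

open MeasureTheory Filter Topology

noncomputable section

namespace Mosco

variable {E : Type*} [MeasurableSpace E]

/-- The inner product of two real-valued functions with respect to a measure,
`⟨φ, ψ⟩ = ∫ φ ψ dμ`. -/
def ip (μ : Measure E) (φ ψ : E → ℝ) : ℝ := ∫ x, φ x * ψ x ∂μ

/-- The framework of Section 2.1: mutually singular probability measures `ν n`, `n : ℕ`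
(`ν 0` playing the role of the limit measure `ν`), such that `L²(E, ν 0)` is separable,
together with disjoint sets `En n` carrying `ν n`, and a linear subset `F = 𝓕 ⊆ 𝓓`
which is dense in `L²(E, ν 0)`. -/
structure Frame (E : Type*) [MeasurableSpace E] where
  ν : ℕ → Measure E
  prob : ∀ n, IsProbabilityMeasure (ν n)
  singular : ∀ m n, m ≠ n → (ν m).MutuallySingular (ν n)
  separableL2 : TopologicalSpace.SeparableSpace (Lp ℝ 2 (ν 0))
  En : ℕ → Set E
  measEn : ∀ n, MeasurableSet (En n)
  disjEn : ∀ m n, m ≠ n → Disjoint (En m) (En n)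
  nullEn : ∀ n, ν n (En n)ᶜ = 0
  F : Set (E → ℝ)
  F_measurable : ∀ φ ∈ F, Measurable φ
  F_memL2 : ∀ φ ∈ F, ∀ n, MemLp φ 2 (ν n)
  F_tendsto : ∀ φ ∈ F, Tendsto (fun n => ip (ν n) φ φ) atTop (𝓝 (ip (ν 0) φ φ))
  F_linear : ∀ φ ∈ F, ∀ ψ ∈ F, ∀ a b : ℝ, (fun x => a * φ x + b * ψ x) ∈ F
  F_dense : ∀ f : E → ℝ, Measurable f → MemLp f 2 (ν 0) → ∀ ε : ℝ, 0 < ε →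
    ∃ φ ∈ F, ip (ν 0) (fun x => f x - φ x) (fun x => f x - φ x) < ε

/-- The set `𝓓`: everywhere defined measurable functions lying in every `L²(E, ν n)`
whose `ν n`-norms converge to the `ν 0`-norm. -/
def Frame.D (fr : Frame E) : Set (E → ℝ) :=
  {φ | Measurable φ ∧ (∀ n, MemLp φ 2 (fr.ν n)) ∧
    Tendsto (fun n => ip (fr.ν n) φ φ) atTop (𝓝 (ip (fr.ν 0) φ φ))}

/-- The set `𝓒`: elements of `𝓓` satisfying conditions (c1) and (c2). -/
def Frame.C (fr : Frame E) : Set (E → ℝ) :=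
  {φ | φ ∈ fr.D ∧ (∀ n, 1 ≤ n → ∃ g ∈ fr.F, φ =ᵐ[fr.ν n] g) ∧
    ∀ ψ ∈ fr.F, Tendsto (fun n => ip (fr.ν n) φ ψ) atTop (𝓝 (ip (fr.ν 0) φ ψ))}

/-- The set `𝓥` of multipliers mapping `𝓓` into `𝓓` and `𝓕` into `𝓕`. -/
def Frame.V (fr : Frame E) : Set (E → ℝ) :=
  {ψ | Measurable ψ ∧ (∀ n, MemLp ψ 2 (fr.ν n)) ∧
    (∀ σ ∈ fr.D, (fun x => σ x * ψ x) ∈ fr.D) ∧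
    (∀ τ ∈ fr.F, (fun x => τ x * ψ x) ∈ fr.F)}

/-- `w`-convergence of a sequence `φs` (with `φs n` regarded as an element of
`L²(E, ν n)`) to `φ ∈ L²(E, ν 0)`. -/
def Frame.WConv (fr : Frame E) (φs : ℕ → E → ℝ) (φ : E → ℝ) : Prop :=
  ∀ ψ ∈ fr.C, Tendsto (fun n => ip (fr.ν n) (φs n) ψ) atTop (𝓝 (ip (fr.ν 0) φ ψ))

/-- `s`-convergence: `w`-convergence together with convergence of the norms. -/
def Frame.SConv (fr : Frame E) (φs : ℕ → E → ℝ) (φ : E → ℝ) : Prop :=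
  fr.WConv φs φ ∧
  Tendsto (fun n => ip (fr.ν n) (φs n) (φs n)) atTop (𝓝 (ip (fr.ν 0) φ φ))

theorem tendsto_of_forall_approx {ι α : Type*} [PseudoMetricSpace α] {l : Filter ι}
    {u : ι → α} {a : α}
    (h : ∀ ε > 0, ∃ v : ι → α, ∃ b, Tendsto v l (𝓝 b) ∧
      (∀ᶠ i in l, dist (u i) (v i) ≤ ε) ∧ dist a b ≤ ε) :
    Tendsto u l (𝓝 a) := by
  refine Metric.tendsto_nhds.2 fun ε hε => ?_
  obtain ⟨v, b, hv, huv, hab⟩ := h (ε / 4) (by positivity)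
  filter_upwards [huv, Metric.tendsto_nhds.1 hv (ε / 4) (by positivity)] with i hui hvi
  calc dist (u i) a ≤ dist (u i) (v i) + dist (v i) b + dist b a := dist_triangle4 _ _ _ _
    _ < ε := by linarith [dist_comm a b]

section InnerProduct

variable {μ : Measure E} {f g h : E → ℝ}

theorem ip_comm (f g : E → ℝ) : ip μ f g = ip μ g f := by
  simp only [ip, mul_comm]

theorem ip_self_nonneg : 0 ≤ ip μ f f :=
  integral_nonneg fun _ => mul_self_nonneg _

theorem ip_linear_left (hf : MemLp f 2 μ) (hg : MemLp g 2 μ) (hh : MemLp h 2 μ) (a b : ℝ) :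
    ip μ (fun x => a * f x + b * g x) h = a * ip μ f h + b * ip μ g h := by
  have hfh : Integrable (fun x => f x * h x) μ := hf.integrable_mul hh
  have hgh : Integrable (fun x => g x * h x) μ := hg.integrable_mul hh
  simp only [ip, add_mul, mul_assoc]
  rw [integral_add (hfh.const_mul a) (hgh.const_mul b), integral_const_mul, integral_const_mul]

theorem ip_sub_left (hf : MemLp f 2 μ) (hg : MemLp g 2 μ) (hh : MemLp h 2 μ) :
    ip μ (fun x => f x - g x) h = ip μ f h - ip μ g h := by
  simp only [ip, sub_mul]
  exact integral_sub (hf.integrable_mul hh) (hg.integrable_mul hh)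

theorem ip_eq_inner (hf : MemLp f 2 μ) (hg : MemLp g 2 μ) :
    ip μ f g = inner ℝ (hf.toLp f) (hg.toLp g) := by
  rw [L2.inner_def]
  refine integral_congr_ae ?_
  filter_upwards [hf.coeFn_toLp, hg.coeFn_toLp] with x hfx hgx
  simp [hfx, hgx, mul_comm]

theorem ip_sq_le (hf : MemLp f 2 μ) (hg : MemLp g 2 μ) :
    ip μ f g ^ 2 ≤ ip μ f f * ip μ g g := by
  rw [sq, ip_eq_inner hf hg, ip_eq_inner hf hf, ip_eq_inner hg hg]
  exact real_inner_mul_inner_self_le _ _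

end InnerProduct

def TendstoIP (μ : ℕ → Measure E) (f g : E → ℝ) : Prop :=
  Tendsto (fun n => ip (μ n) f g) atTop (𝓝 (ip (μ 0) f g))

namespace TendstoIP

variable {μ : ℕ → Measure E} {f g h : E → ℝ}

theorem symm (hfg : TendstoIP μ f g) : TendstoIP μ g f := by
  simpa only [TendstoIP, ip_comm g f] using hfg

theorem linear_left (hf : ∀ n, MemLp f 2 (μ n)) (hg : ∀ n, MemLp g 2 (μ n))
    (hh : ∀ n, MemLp h 2 (μ n)) (hfh : TendstoIP μ f h) (hgh : TendstoIP μ g h) (a b : ℝ) :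
    TendstoIP μ (fun x => a * f x + b * g x) h := by
  simp only [TendstoIP, ip_linear_left (hf _) (hg _) (hh _)]
  exact (hfh.const_mul a).add (hgh.const_mul b)

theorem linear_right (hf : ∀ n, MemLp f 2 (μ n)) (hg : ∀ n, MemLp g 2 (μ n))
    (hh : ∀ n, MemLp h 2 (μ n)) (hhf : TendstoIP μ h f) (hhg : TendstoIP μ h g) (a b : ℝ) :
    TendstoIP μ h (fun x => a * f x + b * g x) :=
  (linear_left hf hg hh hhf.symm hhg.symm a b).symm

theorem sub_left (hf : ∀ n, MemLp f 2 (μ n)) (hg : ∀ n, MemLp g 2 (μ n))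
    (hh : ∀ n, MemLp h 2 (μ n)) (hfh : TendstoIP μ f h) (hgh : TendstoIP μ g h) :
    TendstoIP μ (fun x => f x - g x) h := by
  simp only [TendstoIP, ip_sub_left (hf _) (hg _) (hh _)]
  exact hfh.sub hgh

theorem sub_right (hf : ∀ n, MemLp f 2 (μ n)) (hg : ∀ n, MemLp g 2 (μ n))
    (hh : ∀ n, MemLp h 2 (μ n)) (hhf : TendstoIP μ h f) (hhg : TendstoIP μ h g) :
    TendstoIP μ h (fun x => f x - g x) :=
  (sub_left hf hg hh hhf.symm hhg.symm).symm

theorem of_approx (hf : ∀ n, MemLp f 2 (μ n)) (hg : ∀ n, MemLp g 2 (μ n))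
    (hff : BddAbove (Set.range fun n => ip (μ n) f f))
    (happrox : ∀ δ > 0, ∃ χ : E → ℝ, (∀ n, MemLp χ 2 (μ n)) ∧ TendstoIP μ f χ ∧
      TendstoIP μ (fun x => g x - χ x) (fun x => g x - χ x) ∧
      ip (μ 0) (fun x => g x - χ x) (fun x => g x - χ x) < δ) :
    TendstoIP μ f g := by
  obtain ⟨M, hM⟩ := hff
  have hM : ∀ n, ip (μ n) f f ≤ M := fun n => hM ⟨n, rfl⟩
  have hM₀ : 0 ≤ M := ip_self_nonneg.trans (hM 0)
  refine tendsto_of_forall_approx fun ε hε => ?_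
  obtain ⟨χ, hχ, hfχ, hdist, hdist₀⟩ := happrox (ε ^ 2 / (M + 1)) (by positivity)
  -- Cauchy–Schwarz: `|⟨f, g - χ⟩|² ≤ M ‖g - χ‖² ≤ M ε² / (M + 1) ≤ ε²`.
  have close : ∀ n, ip (μ n) (fun x => g x - χ x) (fun x => g x - χ x) < ε ^ 2 / (M + 1) →
      dist (ip (μ n) f g) (ip (μ n) f χ) ≤ ε := by
    intro n hn
    have hsub := ip_sub_left (hg n) (hχ n) (hf n)
    rw [Real.dist_eq, ip_comm _ g, ip_comm _ χ, ← hsub]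
    refine abs_le_of_sq_le_sq ?_ hε.le
    calc ip (μ n) (fun x => g x - χ x) f ^ 2
        ≤ ip (μ n) (fun x => g x - χ x) (fun x => g x - χ x) * ip (μ n) f f :=
          ip_sq_le ((hg n).sub (hχ n)) (hf n)
      _ ≤ ε ^ 2 / (M + 1) * M := mul_le_mul hn.le (hM n) ip_self_nonneg (by positivity)
      _ ≤ ε ^ 2 := by
          rw [div_mul_eq_mul_div, div_le_iff₀ (by positivity)]
          nlinarith [sq_nonneg ε]
  exact ⟨_, _, hfχ, (hdist.eventually_lt_const hdist₀).mono fun n => close n,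
    close 0 hdist₀⟩

end TendstoIP

theorem Frame.tendstoIP_of_mem_C (fr : Frame E) {φ ψ : E → ℝ} (hφ : φ ∈ fr.C) (hψ : ψ ∈ fr.C) :
    TendstoIP fr.ν φ ψ := by
  obtain ⟨⟨-, hφL, hφφ⟩, -, hφF⟩ := hφ
  obtain ⟨⟨hψm, hψL, hψψ⟩, -, hψF⟩ := hψ
  refine TendstoIP.of_approx hφL hψL hφφ.bddAbove_range fun δ hδ => ?_
  obtain ⟨χ, hχF, hχ⟩ := fr.F_dense ψ hψm (hψL 0) δ hδ
  have hχL := fr.F_memL2 χ hχF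
  have hψχ : TendstoIP fr.ν ψ (fun x => ψ x - χ x) :=
    TendstoIP.sub_right hψL hχL hψL hψψ (hψF χ hχF)
  have hχχ : TendstoIP fr.ν χ (fun x => ψ x - χ x) :=
    TendstoIP.sub_right hψL hχL hχL (TendstoIP.symm (hψF χ hχF)) (fr.F_tendsto χ hχF)
  exact ⟨χ, hχL, hφF χ hχF, TendstoIP.sub_left hψL hχL (fun n => (hψL n).sub (hχL n)) hψχ hχχ, hχ⟩

/-- Lemma 2.1 (b): the set `𝓒` is linear: if `φ, ψ ∈ 𝓒` and `a, b ∈ ℝ`,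
then `a • φ + b • ψ ∈ 𝓒`. -/
theorem C_linear (fr : Frame E) {φ ψ : E → ℝ} (hφ : φ ∈ fr.C) (hψ : ψ ∈ fr.C) (a b : ℝ) :
    (fun x => a * φ x + b * ψ x) ∈ fr.C := by
  have hφψ := fr.tendstoIP_of_mem_C hφ hψ
  obtain ⟨⟨hφm, hφL, hφφ⟩, hφF, hφ₂⟩ := hφ
  obtain ⟨⟨hψm, hψL, hψψ⟩, hψF, hψ₂⟩ := hψ
  have hL : ∀ n, MemLp (fun x => a * φ x + b * ψ x) 2 (fr.ν n) :=
    fun n => ((hφL n).const_mul a).add ((hψL n).const_mul b)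
  refine ⟨⟨(hφm.const_mul a).add (hψm.const_mul b), hL, ?_⟩, fun n hn => ?_, fun χ hχ => ?_⟩
  · exact TendstoIP.linear_left hφL hψL hL
      (TendstoIP.linear_right hφL hψL hφL hφφ hφψ a b)
      (TendstoIP.linear_right hφL hψL hψL hφψ.symm hψψ a b) a b
  · obtain ⟨g, hgF, hg⟩ := hφF n hn
    obtain ⟨h, hhF, hh⟩ := hψF n hn
    refine ⟨_, fr.F_linear g hgF h hhF a b, ?_⟩
    filter_upwards [hg, hh] with x hgx hhx
    rw [hgx, hhx]
  · exact TendstoIP.linear_left hφL hψL (fr.F_memL2 χ hχ) (hφ₂ χ hχ) (hψ₂ χ hχ) a b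

end Mosco
end
end

section
/- The set 𝓒 is dense in L²(E, ν): every f ∈ L²(E, ν) is the limit in L²(E, ν) of the ν-equivalence classes of a sequence of elements of 𝓒. -/
open MeasureTheory Filter Topology

noncomputable section

namespace Mosco

variable {E : Type*} [MeasurableSpace E]

/-! Already `𝓕 ⊆ 𝓒`: condition (c1) holds trivially, and (c2) follows from the convergence of
the norms of `φ + ψ, φ - ψ ∈ 𝓕` by polarization. Hence density of `𝓕` gives density of `𝓒`. -/

lemma ip_self_nonneg_s1 (μ : Measure E) (φ : E → ℝ) : 0 ≤ ip μ φ φ :=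
  integral_nonneg fun x => mul_self_nonneg (φ x)

lemma ip_eq_polarization {μ : Measure E} {φ ψ : E → ℝ} (hφ : MemLp φ 2 μ) (hψ : MemLp ψ 2 μ) :
    ip μ φ ψ = (ip μ (φ + ψ) (φ + ψ) - ip μ (φ - ψ) (φ - ψ)) / 4 := by
  have hsum : Integrable (fun x => (φ + ψ) x * (φ + ψ) x) μ :=
    (hφ.add hψ).integrable_mul (hφ.add hψ)
  have hdiff : Integrable (fun x => (φ - ψ) x * (φ - ψ) x) μ :=
    (hφ.sub hψ).integrable_mul (hφ.sub hψ)
  rw [ip, ip, ip, ← integral_sub hsum hdiff, ← integral_div]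
  congr 1 with x
  simp only [Pi.add_apply, Pi.sub_apply]
  ring

namespace Frame

variable (fr : Frame E)

lemma add_mem_F {φ ψ : E → ℝ} (hφ : φ ∈ fr.F) (hψ : ψ ∈ fr.F) : φ + ψ ∈ fr.F := by
  simpa only [one_mul, Pi.add_def] using fr.F_linear φ hφ ψ hψ 1 1

lemma sub_mem_F {φ ψ : E → ℝ} (hφ : φ ∈ fr.F) (hψ : ψ ∈ fr.F) : φ - ψ ∈ fr.F := by
  simpa only [one_mul, neg_one_mul, ← sub_eq_add_neg, Pi.sub_def] using
    fr.F_linear φ hφ ψ hψ 1 (-1)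

lemma tendsto_ip_of_mem_F {φ ψ : E → ℝ} (hφ : φ ∈ fr.F) (hψ : ψ ∈ fr.F) :
    Tendsto (fun n => ip (fr.ν n) φ ψ) atTop (𝓝 (ip (fr.ν 0) φ ψ)) := by
  have hpolar n := ip_eq_polarization (fr.F_memL2 φ hφ n) (fr.F_memL2 ψ hψ n)
  simp only [hpolar]
  exact ((fr.F_tendsto _ (fr.add_mem_F hφ hψ)).sub
    (fr.F_tendsto _ (fr.sub_mem_F hφ hψ))).div_const 4

lemma F_subset_C : fr.F ⊆ fr.C := fun φ hφ =>
  ⟨⟨fr.F_measurable φ hφ, fr.F_memL2 φ hφ, fr.F_tendsto φ hφ⟩,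
    fun _ _ => ⟨φ, hφ, ae_eq_refl φ⟩, fun _ hψ => fr.tendsto_ip_of_mem_F hφ hψ⟩

end Frame

lemma exists_seq_mem_tendsto_zero {α : Type*} {S : Set α} {g : α → ℝ}
    (hg : ∀ a ∈ S, 0 ≤ g a) (hsmall : ∀ ε > 0, ∃ a ∈ S, g a < ε) :
    ∃ u : ℕ → α, (∀ k, u k ∈ S) ∧ Tendsto (fun k => g (u k)) atTop (𝓝 0) := by
  choose u huS hu using fun k : ℕ => hsmall (1 / (k + 1)) (by positivity)
  exact ⟨u, huS, squeeze_zero (fun k => hg _ (huS k)) (fun k => (hu k).le)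
    tendsto_one_div_add_atTop_nhds_zero_nat⟩

/-- Lemma 2.1 (c): the set `𝓒` is dense in `L²(E, ν)`: every `f ∈ L²(E, ν)` is the
`L²(E, ν)`-limit of a sequence of elements of `𝓒`. -/
theorem C_dense (fr : Frame E) (f : E → ℝ) (hfm : Measurable f) (hf2 : MemLp f 2 (fr.ν 0)) :
    ∃ φs : ℕ → E → ℝ, (∀ k, φs k ∈ fr.C) ∧
      Tendsto (fun k => ip (fr.ν 0) (fun x => f x - φs k x) (fun x => f x - φs k x))
        atTop (𝓝 0) := by
  obtain ⟨φs, hφsF, hφs⟩ := exists_seq_mem_tendsto_zero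
    (fun φ _ => ip_self_nonneg_s1 (fr.ν 0) (fun x => f x - φ x)) (fr.F_dense f hfm hf2)
  exact ⟨φs, fun k => fr.F_subset_C (hφsF k), hφs⟩

end Mosco
end
end

section
/- If φ ∈ 𝓒 and ψ ∈ 𝓥, then the pointwise product φψ belongs to 𝓒. -/
open MeasureTheory Filter Topology

noncomputable section

namespace Mosco

variable {E : Type*} [MeasurableSpace E]

theorem ip_mul_left_eq_ip_mul_right (μ : Measure E) (φ ψ τ : E → ℝ) :
    ip μ (fun x => φ x * ψ x) τ = ip μ φ (fun x => τ x * ψ x) := by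
  unfold ip
  congr 1 with x
  ring

/-- Lemma 2.1 (e): if `φ ∈ 𝓒` and `ψ ∈ 𝓥`, then the pointwise product `φψ`
belongs to `𝓒`. -/
theorem mul_mem_C (fr : Frame E) {φ ψ : E → ℝ} (hφ : φ ∈ fr.C) (hψ : ψ ∈ fr.V) :
    (fun x => φ x * ψ x) ∈ fr.C := by
  obtain ⟨hφD, hφF, hφlim⟩ := hφ
  obtain ⟨-, -, hψD, hψF⟩ := hψ
  refine ⟨hψD φ hφD, fun n hn => ?_, fun τ hτ => ?_⟩
  · obtain ⟨g, hg, hφg⟩ := hφF n hn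
    exact ⟨fun x => g x * ψ x, hψF g hg, hφg.mul (ae_eq_refl ψ)⟩
  · simpa only [ip_mul_left_eq_ip_mul_right] using hφlim _ (hψF τ hτ)

end Mosco
end
end

section
/- If φ_n ∈ 𝓒 w-converges to φ ∈ L²(E, ν) and ψ_n ∈ 𝓒 s-converges to ψ ∈ L²(E, ν), then ⟨φ_n, ψ_n⟩_n → ⟨φ, ψ⟩ as n → ∞. -/
open MeasureTheory Filter Topology

noncomputable section

namespace Mosco

variable {E : Type*} [MeasurableSpace E]

/-!
Since the `ν n` live on the disjoint sets `En n`, the functions `ψs n` (on `En n`, `n ≥ 1`) and a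
measurable version of `ψ` (elsewhere) glue to a single function `Ψ` that equals `ψs n` `ν n`-a.e.
and `ψ` `ν`-a.e. The `s`-convergence of `ψs` is exactly what puts `Ψ` in `𝓒`: it gives the
convergence of the norms of `Ψ` and, tested against `𝓕 ⊆ 𝓒`, condition (c2). Testing the
`w`-convergence of `φs` against `Ψ` then yields the claim.
-/

open Function

section ip

variable {μ : Measure E} {f f' g g' : E → ℝ}

lemma ip_congr_ae (hf : f =ᵐ[μ] f') (hg : g =ᵐ[μ] g') : ip μ f g = ip μ f' g' :=
  integral_congr_ae (hf.mul hg)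

lemma ip_self_add (hf : MemLp f 2 μ) (hg : MemLp g 2 μ) :
    ip μ (fun x => f x + g x) (fun x => f x + g x) = ip μ f f + 2 * ip μ f g + ip μ g g := by
  have hff : Integrable (f * f) μ := hf.integrable_mul hf
  have hfg : Integrable (f * g) μ := hf.integrable_mul hg
  have hgg : Integrable (g * g) μ := hg.integrable_mul hg
  have hexpand : (fun x => (f x + g x) * (f x + g x))
      = fun x => f x * f x + 2 * (f x * g x) + g x * g x := by
    funext x; ring
  unfold ip
  rw [hexpand, integral_add, integral_add, integral_const_mul]
  exacts [hff, hfg.const_mul 2, hff.add (hfg.const_mul 2), hgg]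

end ip

section glue

variable {α β : Type*} {S : ℕ → Set α}

lemma exists_mem_or_notMem_iUnion (S : ℕ → Set α) (x : α) : ∃ n, x ∈ S n ∨ x ∉ ⋃ m, S m := by
  by_cases hx : x ∈ ⋃ m, S m
  · obtain ⟨n, hn⟩ := Set.mem_iUnion.1 hx
    exact ⟨n, .inl hn⟩
  · exact ⟨0, .inr hx⟩

open Classical in
/-- The function equal to `g n` on `S n` and to `g 0` off `⋃ n, S n`. -/
def glue (S : ℕ → Set α) (g : ℕ → α → β) (x : α) : β :=
  g (Nat.find (exists_mem_or_notMem_iUnion S x)) x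

lemma glue_eq_of_mem (hS : Pairwise (Disjoint on S)) (g : ℕ → α → β) {n : ℕ} {x : α}
    (hx : x ∈ S n) : glue S g x = g n x := by
  classical
  have hfind : Nat.find (exists_mem_or_notMem_iUnion S x) = n := by
    refine (Nat.find_eq_iff _).2 ⟨.inl hx, fun m _ hm => ?_⟩
    rcases hm with hm | hm
    · exact Set.disjoint_left.1 (hS (by omega)) hm hx
    · exact hm (Set.mem_iUnion_of_mem n hx)
  simp only [glue, hfind]

lemma glue_ae_eq [MeasurableSpace α] (hS : Pairwise (Disjoint on S)) (g : ℕ → α → β)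
    {μ : Measure α} {n : ℕ} (hμ : μ (S n)ᶜ = 0) : glue S g =ᵐ[μ] g n :=
  measure_mono_null (fun _ hx hxS => hx (glue_eq_of_mem hS g hxS)) hμ

lemma measurable_glue [MeasurableSpace α] [MeasurableSpace β] (hS : ∀ n, MeasurableSet (S n))
    {g : ℕ → α → β} (hg : ∀ n, Measurable (g n)) : Measurable (glue S g) := by
  classical
  exact Measurable.find (p := fun n x => x ∈ S n ∨ x ∉ ⋃ m, S m) hg
    (fun n => (hS n).union (MeasurableSet.iUnion hS).compl) (exists_mem_or_notMem_iUnion S)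

end glue

lemma Frame.F_subset_C_s6 (fr : Frame E) : fr.F ⊆ fr.C := by
  intro f hf
  refine ⟨⟨fr.F_measurable f hf, fr.F_memL2 f hf, fr.F_tendsto f hf⟩,
    fun n _ => ⟨f, hf, .rfl⟩, fun τ hτ => ?_⟩
  have hsum : (fun x => f x + τ x) ∈ fr.F := by
    simpa only [one_mul] using fr.F_linear f hf τ hτ 1 1
  have hpolar : ∀ n, ip (fr.ν n) f τ
      = (ip (fr.ν n) (fun x => f x + τ x) (fun x => f x + τ x)
        - ip (fr.ν n) f f - ip (fr.ν n) τ τ) / 2 := fun n => by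
    rw [ip_self_add (fr.F_memL2 f hf n) (fr.F_memL2 τ hτ n)]
    ring
  simp only [hpolar]
  exact (((fr.F_tendsto _ hsum).sub (fr.F_tendsto f hf)).sub (fr.F_tendsto τ hτ)).div_const 2

lemma Frame.mem_C_of_sconv_of_ae_eq (fr : Frame E) {ψs : ℕ → E → ℝ} {ψ Ψ : E → ℝ}
    (hψs : ∀ n, ψs n ∈ fr.C) (hψ2 : MemLp ψ 2 (fr.ν 0)) (hs : fr.SConv ψs ψ)
    (hΨm : Measurable Ψ) (hΨ0 : Ψ =ᵐ[fr.ν 0] ψ) (hΨn : ∀ n, 1 ≤ n → Ψ =ᵐ[fr.ν n] ψs n) :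
    Ψ ∈ fr.C := by
  have hmemLp : ∀ n, MemLp Ψ 2 (fr.ν n) := fun n => by
    rcases Nat.eq_zero_or_pos n with rfl | hn
    · exact hψ2.ae_eq hΨ0.symm
    · exact ((hψs n).1.2.1 n).ae_eq (hΨn n hn).symm
  have hnorm : Tendsto (fun n => ip (fr.ν n) Ψ Ψ) atTop (𝓝 (ip (fr.ν 0) Ψ Ψ)) := by
    rw [ip_congr_ae hΨ0 hΨ0]
    refine hs.2.congr' ?_
    filter_upwards [eventually_ge_atTop 1] with n hn
    exact (ip_congr_ae (hΨn n hn) (hΨn n hn)).symm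
  refine ⟨⟨hΨm, hmemLp, hnorm⟩, fun n hn => ?_, fun τ hτ => ?_⟩
  · obtain ⟨g, hg, hψg⟩ := (hψs n).2.1 n hn
    exact ⟨g, hg, (hΨn n hn).trans hψg⟩
  · rw [ip_congr_ae hΨ0 .rfl]
    refine (hs.1 τ (fr.F_subset_C_s6 hτ)).congr' ?_
    filter_upwards [eventually_ge_atTop 1] with n hn
    exact (ip_congr_ae (hΨn n hn) .rfl).symm

lemma Frame.exists_mem_C_ae_eq_of_sconv (fr : Frame E) {ψs : ℕ → E → ℝ} {ψ : E → ℝ}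
    (hψs : ∀ n, ψs n ∈ fr.C) (hψ2 : MemLp ψ 2 (fr.ν 0)) (hs : fr.SConv ψs ψ) :
    ∃ Ψ ∈ fr.C, Ψ =ᵐ[fr.ν 0] ψ ∧ ∀ n, 1 ≤ n → Ψ =ᵐ[fr.ν n] ψs n := by
  set g := update ψs 0 (hψ2.1.mk ψ)
  have hdisj : Pairwise (Disjoint on fr.En) := fun m n h => fr.disjEn m n h
  have hΨ0 : glue fr.En g =ᵐ[fr.ν 0] ψ := by
    refine (glue_ae_eq hdisj g (fr.nullEn 0)).trans ?_
    simpa only [g, update_self] using hψ2.1.ae_eq_mk.symm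
  have hΨn : ∀ n, 1 ≤ n → glue fr.En g =ᵐ[fr.ν n] ψs n := fun n hn => by
    simpa only [g, update_of_ne (by omega : n ≠ 0)]
      using glue_ae_eq hdisj g (fr.nullEn n)
  have hgm : ∀ n, Measurable (g n) := fun n => by
    rcases Nat.eq_zero_or_pos n with rfl | hn
    · simpa only [g, update_self] using hψ2.1.stronglyMeasurable_mk.measurable
    · simpa only [g, update_of_ne (by omega : n ≠ 0)] using (hψs n).1.1
  exact ⟨glue fr.En g, fr.mem_C_of_sconv_of_ae_eq hψs hψ2 hs (measurable_glue fr.measEn hgm)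
    hΨ0 hΨn, hΨ0, hΨn⟩

theorem tendsto_ip_of_wconv_sconv_general (fr : Frame E) (φs ψs : ℕ → E → ℝ)
    (hψs : ∀ n, ψs n ∈ fr.C)
    (φ ψ : E → ℝ)
    (hψ2 : MemLp ψ 2 (fr.ν 0))
    (hw : fr.WConv φs φ) (hs : fr.SConv ψs ψ) :
    Tendsto (fun n => ip (fr.ν n) (φs n) (ψs n)) atTop (𝓝 (ip (fr.ν 0) φ ψ)) := by
  obtain ⟨Ψ, hΨC, hΨ0, hΨn⟩ := fr.exists_mem_C_ae_eq_of_sconv hψs hψ2 hs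
  have hlim := hw Ψ hΨC
  rw [ip_congr_ae .rfl hΨ0] at hlim
  refine hlim.congr' ?_
  filter_upwards [eventually_ge_atTop 1] with n hn
  exact ip_congr_ae .rfl (hΨn n hn)

/-- Proposition 2.3 (c): if `φs n ∈ 𝓒` `w`-converges to `φ ∈ L²(E, ν)` and
`ψs n ∈ 𝓒` `s`-converges to `ψ ∈ L²(E, ν)`, then `⟨φs n, ψs n⟩ₙ → ⟨φ, ψ⟩`. -/
theorem tendsto_ip_of_wconv_sconv (fr : Frame E) (φs ψs : ℕ → E → ℝ)
    (hφs : ∀ n, φs n ∈ fr.C) (hψs : ∀ n, ψs n ∈ fr.C)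
    (φ ψ : E → ℝ) (hφm : Measurable φ) (hφ2 : MemLp φ 2 (fr.ν 0))
    (hψm : Measurable ψ) (hψ2 : MemLp ψ 2 (fr.ν 0))
    (hw : fr.WConv φs φ) (hs : fr.SConv ψs ψ) :
    Tendsto (fun n => ip (fr.ν n) (φs n) (ψs n)) atTop (𝓝 (ip (fr.ν 0) φ ψ)) :=
  tendsto_ip_of_wconv_sconv_general fr φs ψs hψs φ ψ hψ2 hw hs

end Mosco
end
end
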